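/- arXiv:2012.01237 — 6 statements merged into one kernel-verified Lean document; each statement's English description precedes it below -/
import Mathlib

section
/- Let k be any field and consider the polynomial ring k[x,y,u,v,f,g,p,q] graded so that x, y, u, v have degree 1 and f, g, p, q have degree 2. There do not exist weighted-homogeneous polynomials x_1, x_2, x_3 of degree 1 and q_1, q_2, q_3 of degree 3 in this ring such that x²f + y²g + u²p + v²q = x_1q_1 + x_2q_2 + x_3q_3. -/
/-- The weights on the polynomial ring `k[x,y,u,v,f,g,p,q]`: the first four variables
`x, y, u, v` have degree 1 and the last four variables `f, g, p, q` have degree 2. -/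
def strengthWeight : Fin 8 → ℕ := fun i => if (i : ℕ) < 4 then 1 else 2

open MvPolynomial

lemma strengthWeight_pos (i : Fin 8) : 1 ≤ strengthWeight i := by
  unfold strengthWeight; split <;> omega

lemma weight_single_one (j : Fin 8) :
    Finsupp.weight strengthWeight (Finsupp.single j 1) = strengthWeight j := by
  rw [Finsupp.weight_apply, Finsupp.sum_single_index] <;> simp

lemma wd_one {d : Fin 8 →₀ ℕ} (hd : Finsupp.weight strengthWeight d = 1) :
    ∃ j : Fin 8, d = Finsupp.single j 1 := by
  rw [Finsupp.weight_apply, Finsupp.sum] at hd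
  simp only [smul_eq_mul] at hd
  have hcard : d.support.card ≤ 1 := by
    have : d.support.card • 1 ≤ ∑ i ∈ d.support, d i * strengthWeight i :=
      Finset.card_nsmul_le_sum d.support _ 1 (fun i hi => by
        have h1 : 1 ≤ d i := Nat.one_le_iff_ne_zero.2 (Finsupp.mem_support_iff.1 hi)
        calc 1 = 1 * 1 := by ring
          _ ≤ d i * strengthWeight i := Nat.mul_le_mul h1 (strengthWeight_pos i))
    simp only [smul_eq_mul, mul_one] at this
    omega
  interval_cases h : d.support.card
  · rw [Finset.card_eq_zero, Finsupp.support_eq_empty] at h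
    subst h; simp at hd
  · rw [Finset.card_eq_one] at h
    obtain ⟨j, hj⟩ := h
    rw [hj, Finset.sum_singleton] at hd
    have hw := strengthWeight_pos j
    have hdj : d j = 1 := by nlinarith
    refine ⟨j, ?_⟩
    have := (Finsupp.support_eq_singleton.1 hj).2
    rwa [hdj] at this

lemma coeff_single_zero_of_ge {k : Type*} [Field k] {h : MvPolynomial (Fin 8) k}
    (hh : h.IsWeightedHomogeneous strengthWeight 1) {j : Fin 8} (hj : ¬ (j : ℕ) < 4) :
    h.coeff (Finsupp.single j 1) = 0 := by
  by_contra hc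
  have := hh hc
  rw [weight_single_one] at this
  unfold strengthWeight at this
  rw [if_neg hj] at this
  omega

lemma struct {k : Type*} [Field k] {h : MvPolynomial (Fin 8) k}
    (hh : h.IsWeightedHomogeneous strengthWeight 1) :
    h = ∑ j : Fin 8, C (h.coeff (Finsupp.single j 1)) * X j := by
  ext d
  rw [coeff_sum]
  simp only [coeff_C_mul, coeff_X']
  by_cases hd : ∃ j : Fin 8, d = Finsupp.single j 1
  · obtain ⟨j, rfl⟩ := hd
    rw [Finset.sum_eq_single j]
    · simp
    · intro b _ hb
      rw [if_neg, mul_zero]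
      exact fun he => hb (Finsupp.single_left_injective one_ne_zero he)
    · simp
  · have h1 : h.coeff d = 0 := by
      by_contra hc
      exact hd (wd_one (hh hc))
    rw [h1, Finset.sum_eq_zero]
    intro j _
    rw [if_neg, mul_zero]
    exact fun he => hd ⟨j, he.symm⟩

lemma eval_deg1 {k : Type*} [Field k] {h : MvPolynomial (Fin 8) k}
    (hh : h.IsWeightedHomogeneous strengthWeight 1) (v : Fin 8 → k) :
    eval v h = ∑ j : Fin 8, h.coeff (Finsupp.single j 1) * v j := by
  conv_lhs => rw [struct hh]
  simp [eval_sum]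

open MvPolynomial in
/-- In `k[x,y,u,v,f,g,p,q]` with `deg x = deg y = deg u = deg v = 1` and
`deg f = deg g = deg p = deg q = 2`, there are no weighted-homogeneous polynomials
`x₁, x₂, x₃` of degree 1 and `q₁, q₂, q₃` of degree 3 with
`x²f + y²g + u²p + v²q = x₁q₁ + x₂q₂ + x₃q₃`. -/
theorem case_a (k : Type*) [Field k] :
    ¬ ∃ x1 x2 x3 q1 q2 q3 : MvPolynomial (Fin 8) k,
      x1.IsWeightedHomogeneous strengthWeight 1 ∧
      x2.IsWeightedHomogeneous strengthWeight 1 ∧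
      x3.IsWeightedHomogeneous strengthWeight 1 ∧
      q1.IsWeightedHomogeneous strengthWeight 3 ∧
      q2.IsWeightedHomogeneous strengthWeight 3 ∧
      q3.IsWeightedHomogeneous strengthWeight 3 ∧
      (X 0 ^ 2 * X 4 + X 1 ^ 2 * X 5 + X 2 ^ 2 * X 6 + X 3 ^ 2 * X 7 :
          MvPolynomial (Fin 8) k) = x1 * q1 + x2 * q2 + x3 * q3 := by
  rintro ⟨x1, x2, x3, q1, q2, q3, h1, h2, h3, _, _, _, heq⟩
  classical
  set xs : Fin 3 → MvPolynomial (Fin 8) k := ![x1, x2, x3] with hxs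
  have hxh : ∀ i : Fin 3, (xs i).IsWeightedHomogeneous strengthWeight 1 := by
    intro i; fin_cases i <;> assumption
  set M : Matrix (Fin 3) (Fin 4) k :=
    Matrix.of fun i j => (xs i).coeff (Finsupp.single (Fin.castLE (by norm_num) j) 1) with hM
  -- find a nonzero kernel vector
  have hninj : ¬ Function.Injective M.mulVecLin := by
    intro hinj
    have := LinearMap.finrank_le_finrank_of_injective hinj
    rw [Module.finrank_fintype_fun_eq_card, Module.finrank_fintype_fun_eq_card] at this
    simp at this
  obtain ⟨w, hwker, hwne⟩ :=
    (Submodule.ne_bot_iff _).1 (fun hb => hninj ((LinearMap.ker_eq_bot).1 hb))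
  have hMw : ∀ i : Fin 3, ∑ j : Fin 4, M i j * w j = 0 := by
    intro i
    have := congrFun hwker i
    simpa [Matrix.mulVecLin, Matrix.mulVec, dotProduct] using this
  -- evaluation points
  set v : Fin 4 → Fin 8 → k := fun t j =>
    if hj : (j : ℕ) < 4 then w ⟨j, hj⟩ else if (j : ℕ) = 4 + t then 1 else 0 with hv
  have hvlt : ∀ t : Fin 4, ∀ j : Fin 8, (hj : (j : ℕ) < 4) → v t j = w ⟨j, hj⟩ := by
    intro t j hj; simp [hv, hj]
  have hevalx : ∀ t : Fin 4, ∀ i : Fin 3, eval (v t) (xs i) = 0 := by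
    intro t i
    rw [eval_deg1 (hxh i) (v t)]
    rw [Fin.sum_univ_eight]
    rw [coeff_single_zero_of_ge (hxh i) (by decide : ¬ ((4 : Fin 8) : ℕ) < 4),
        coeff_single_zero_of_ge (hxh i) (by decide : ¬ ((5 : Fin 8) : ℕ) < 4),
        coeff_single_zero_of_ge (hxh i) (by decide : ¬ ((6 : Fin 8) : ℕ) < 4),
        coeff_single_zero_of_ge (hxh i) (by decide : ¬ ((7 : Fin 8) : ℕ) < 4)]
    have := hMw i
    rw [Fin.sum_univ_four] at this
    simp only [hM, Matrix.of_apply] at this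
    rw [hvlt t 0 (by decide), hvlt t 1 (by decide), hvlt t 2 (by decide),
        hvlt t 3 (by decide)]
    simpa using this
  have hw0 : ∀ t : Fin 4, w t = 0 := by
    intro t
    have he := congrArg (eval (v t)) heq
    simp only [map_add, map_mul, map_pow, eval_X] at he
    have e1 : eval (v t) x1 = 0 := by simpa [hxs] using hevalx t 0
    have e2 : eval (v t) x2 = 0 := by simpa [hxs] using hevalx t 1
    have e3 : eval (v t) x3 = 0 := by simpa [hxs] using hevalx t 2
    rw [e1, e2, e3] at he
    rw [hvlt t 0 (by decide), hvlt t 1 (by decide), hvlt t 2 (by decide),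
        hvlt t 3 (by decide)] at he
    have hv4 : ∀ (j : Fin 8) (s : Fin 4), (j : ℕ) = 4 + (s : ℕ) →
        v t j = if s = t then 1 else 0 := by
      intro j s hj
      simp only [hv]
      rw [dif_neg (by omega)]
      by_cases hs : s = t
      · subst hs; rw [if_pos (by omega), if_pos rfl]
      · have hs' : (s : ℕ) ≠ (t : ℕ) := fun h => hs (Fin.ext h)
        rw [if_neg (by omega), if_neg hs]
    rw [hv4 4 0 (by decide), hv4 5 1 (by decide), hv4 6 2 (by decide),
        hv4 7 3 (by decide)] at he
    fin_cases t <;> simpa using he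
  exact hwne (funext hw0)
end

section
/- Let k be any field and consider the polynomial ring k[x,y,u,v,f,g,p,q] graded so that x, y, u, v have degree 1 and f, g, p, q have degree 2. There do not exist weighted-homogeneous polynomials x_1, x_2 of degree 1, q_1, q_2 of degree 3, and g_1, h_1 of degree 2 in this ring such that x²f + y²g + u²p + v²q = x_1q_1 + x_2q_2 + g_1h_1. -/
open MvPolynomial Finsupp

theorem Finsupp.exists_eq_single_one_of_weight_eq_one {σ : Type*} {w : σ → ℕ}
    (hw : ∀ i, w i ≠ 0) {m : σ →₀ ℕ} (h : weight w m = 1) : ∃ i, m = single i 1 := by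
  have : NonTorsionWeight ℕ w := Finsupp.nonTorsionWeight_of ℕ w hw
  obtain ⟨i, hi⟩ : ∃ i, m i ≠ 0 := by
    by_contra! hm
    simp [show m = 0 from Finsupp.ext hm] at h
  have hsub := weight_sub_single_add (w := w) hi
  have hrest : m - single i 1 = 0 := by
    rw [← weight_eq_zero_iff_eq_zero w]
    have := hw i
    omega
  refine ⟨i, ?_⟩
  rw [← sub_add_single_one_cancel hi, hrest, zero_add]

namespace MvPolynomial

variable {R σ τ M : Type*} [CommSemiring R]

theorem IsWeightedHomogeneous.aeval [AddCommMonoid M] {w : σ → M} {w' : τ → M}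
    {φ : MvPolynomial σ R} {m : M} (hφ : φ.IsWeightedHomogeneous w m)
    (g : σ → MvPolynomial τ R) (hg : ∀ i, (g i).IsWeightedHomogeneous w' (w i)) :
    (aeval g φ).IsWeightedHomogeneous w' m := by
  rw [φ.as_sum, map_sum]
  refine IsWeightedHomogeneous.sum _ _ _ fun d hd => ?_
  rw [aeval_monomial, algebraMap_eq, ← hφ (mem_support_iff.mp hd), weight_apply]
  exact (IsWeightedHomogeneous.prod _ _ _ fun i _ => (hg i).pow (d i)).C_mul _

theorem IsWeightedHomogeneous.eq_sum_C_mul_X [Fintype σ] {w : σ → ℕ} (hw : ∀ i, w i ≠ 0)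
    {φ : MvPolynomial σ R} (hφ : φ.IsWeightedHomogeneous w 1) :
    φ = ∑ i, C (coeff (single i 1) φ) * X i := by
  classical
  ext m
  simp only [coeff_sum, coeff_C_mul, coeff_X]
  by_cases hm : ∃ i, m = single i 1
  · obtain ⟨i, rfl⟩ := hm
    rw [Finset.sum_eq_single i (fun j _ hj => by simp [single_left_inj one_ne_zero, hj])
      (by simp)]
    simp
  · push Not at hm
    rw [Finset.sum_eq_zero fun i _ => by simp [(hm i).symm]]
    by_contra h
    obtain ⟨i, hi⟩ := exists_eq_single_one_of_weight_eq_one hw (hφ h)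
    exact hm i hi

theorem IsWeightedHomogeneous.pderiv_eq_C {w : σ → ℕ} (hw : ∀ i, w i ≠ 0) {j : σ}
    {φ : MvPolynomial σ R} (hφ : φ.IsWeightedHomogeneous w (w j)) :
    pderiv j φ = C (coeff (single j 1) φ) := by
  have h0 : (pderiv j φ).IsWeightedHomogeneous w 0 := hφ.pderiv (zero_add _)
  rw [← h0.weightedHomogeneousComponent_same, weightedHomogeneousComponent_zero _ hw,
    coeff_pderiv]
  simp

theorem eq_zero_of_sq_eq_C_mul_of_eval_eq_zero {R : Type*} [CommRing R] [IsDomain R]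
    {ℓ₁ ℓ₂ Q : MvPolynomial σ R} {ν₁ ν₂ : R} (h₁ : ℓ₁ ^ 2 = C ν₁ * Q) (h₂ : ℓ₂ ^ 2 = C ν₂ * Q)
    {z : σ → R} (hz₁ : eval z ℓ₁ = 0) (hz₂ : eval z ℓ₂ ≠ 0) : ℓ₁ = 0 := by
  have e₁ := congrArg (eval z) h₁
  have e₂ := congrArg (eval z) h₂
  simp only [map_pow, map_mul, eval_C, hz₁] at e₁ e₂
  have hQ : eval z Q ≠ 0 := right_ne_zero_of_mul (e₂ ▸ pow_ne_zero 2 hz₂)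
  have hν : ν₁ = 0 := by simpa [hQ] using e₁.symm
  simpa [hν] using h₁

end MvPolynomial

theorem LinearIndependent.exists_mul_sub_mul_ne_zero {ι K : Type*} [Field K] {a b : ι → K}
    (h : LinearIndependent K ![a, b]) : ∃ i j, a i * b j - a j * b i ≠ 0 := by
  obtain ⟨i, hi⟩ : ∃ i, a i ≠ 0 := by
    by_contra! ha
    exact h.ne_zero 0 (funext ha)
  by_contra! hc
  have := (LinearIndependent.pair_iff.mp h) (b i) (-a i) (funext fun j => by
    simp only [Pi.add_apply, Pi.smul_apply, smul_eq_mul, Pi.zero_apply]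
    linear_combination hc j i)
  exact hi (neg_eq_zero.mp this.2)

theorem exists_linearIndependent_pair_dotProduct_eq_zero {ι K : Type*} [Fintype ι] [Field K]
    (hι : 4 ≤ Fintype.card ι) (c d : ι → K) :
    ∃ a b : ι → K, c ⬝ᵥ a = 0 ∧ c ⬝ᵥ b = 0 ∧ d ⬝ᵥ a = 0 ∧ d ⬝ᵥ b = 0 ∧
      LinearIndependent K ![a, b] := by
  set L := Matrix.mulVecLin ![c, d]
  have hS : 1 < Module.finrank K (LinearMap.ker L) := by
    have h₁ := L.finrank_range_add_finrank_ker
    have h₂ := Submodule.finrank_le (LinearMap.range L)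
    rw [Module.finrank_fintype_fun_eq_card] at h₁ h₂
    simp only [Fintype.card_fin] at h₂
    omega
  obtain ⟨x, hx⟩ := Module.finrank_pos_iff_exists_ne_zero.mp (zero_lt_one.trans hS)
  obtain ⟨y, hxy⟩ := exists_linearIndependent_pair_of_one_lt_finrank hS hx
  have hmem : ∀ v : LinearMap.ker L, c ⬝ᵥ (v : ι → K) = 0 ∧ d ⬝ᵥ (v : ι → K) = 0 := fun v => by
    have := LinearMap.mem_ker.mp v.2
    simp only [L, funext_iff, Fin.forall_fin_two] at this
    exact this
  refine ⟨x, y, (hmem x).1, (hmem y).1, (hmem x).2, (hmem y).2, ?_⟩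
  have h := hxy.map' (LinearMap.ker L).subtype (Submodule.ker_subtype _)
  rwa [show (LinearMap.ker L).subtype ∘ ![x, y] = ![(x : ι → K), y] by
    ext i : 1; fin_cases i <;> rfl] at h

section

variable {k : Type*} [Field k]

theorem strengthWeight_ne_zero (i : Fin 8) : strengthWeight i ≠ 0 := by
  unfold strengthWeight; split_ifs <;> norm_num

theorem exists_eq_linear_of_isWeightedHomogeneous_one {P : MvPolynomial (Fin 8) k}
    (hP : P.IsWeightedHomogeneous strengthWeight 1) :
    ∃ c : Fin 4 → k, P = C (c 0) * X 0 + C (c 1) * X 1 + C (c 2) * X 2 + C (c 3) * X 3 := by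
  refine ⟨fun i => coeff (single (Fin.castLE (by norm_num) i) 1) P, ?_⟩
  have hvanish : ∀ i : Fin 8, 4 ≤ (i : ℕ) → coeff (single i 1) P = 0 := fun i hi =>
    hP.coeff_eq_zero _ (by simp [weight_single, strengthWeight, not_lt.mpr hi])
  conv_lhs => rw [hP.eq_sum_C_mul_X strengthWeight_ne_zero]
  simp [Fin.sum_univ_eight, hvanish]

/-- The coordinates `x, y, u, v` restricted to the plane spanned by `a` and `b`, with the
variables `X 0, X 1` reused as coordinates on that plane. -/
noncomputable def planeCoord (a b : Fin 4 → k) (t : Fin 4) : MvPolynomial (Fin 8) k :=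
  C (a t) * X 0 + C (b t) * X 1

noncomputable def planeSubst (a b : Fin 4 → k) : Fin 8 → MvPolynomial (Fin 8) k :=
  ![planeCoord a b 0, planeCoord a b 1, planeCoord a b 2, planeCoord a b 3, X 4, X 5, X 6, X 7]

theorem isWeightedHomogeneous_planeSubst (a b : Fin 4 → k) (i : Fin 8) :
    (planeSubst a b i).IsWeightedHomogeneous strengthWeight (strengthWeight i) := by
  have hcoord (t : Fin 4) : (planeCoord a b t).IsWeightedHomogeneous strengthWeight 1 :=
    ((isWeightedHomogeneous_X k _ 0).C_mul _).add ((isWeightedHomogeneous_X k _ 1).C_mul _)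
  fin_cases i
  all_goals first | exact hcoord _ | exact isWeightedHomogeneous_X k _ _

theorem aeval_planeSubst_linear (a b c : Fin 4 → k) :
    aeval (planeSubst a b) (C (c 0) * X 0 + C (c 1) * X 1 + C (c 2) * X 2 + C (c 3) * X 3) =
      C (c ⬝ᵥ a) * X 0 + C (c ⬝ᵥ b) * X 1 := by
  simp [planeSubst, planeCoord, dotProduct, Fin.sum_univ_four]
  ring

theorem aeval_planeSubst_sum_sq_mul (a b : Fin 4 → k) :
    aeval (planeSubst a b)
        (X 0 ^ 2 * X 4 + X 1 ^ 2 * X 5 + X 2 ^ 2 * X 6 + X 3 ^ 2 * X 7 : MvPolynomial (Fin 8) k) =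
      ∑ t : Fin 4, planeCoord a b t ^ 2 * X (t.addNat 4) := by
  simp [planeSubst, Fin.sum_univ_four]

theorem false_of_planeCoord_sq_eq_C_mul {a b ν : Fin 4 → k} {Q : MvPolynomial (Fin 8) k}
    (h : ∀ t, planeCoord a b t ^ 2 = C (ν t) * Q) {i j : Fin 4}
    (hij : a i * b j - a j * b i ≠ 0) : False := by
  have heval (s t : Fin 4) :
      eval ![b s, -a s, 0, 0, 0, 0, 0, 0] (planeCoord a b t) = a t * b s - a s * b t := by
    simp [planeCoord]; ring
  have hj : planeCoord a b j = 0 :=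
    eq_zero_of_sq_eq_C_mul_of_eval_eq_zero (h j) (h i) (by rw [heval, sub_self]) (by rwa [heval])
  have hji := heval i j
  rw [hj, map_zero] at hji
  exact hij (by linear_combination hji)

theorem pderiv_planeCoord (a b : Fin 4 → k) (s t : Fin 4) :
    pderiv (s.addNat 4) (planeCoord a b t) = 0 := by
  have hne (i : Fin 8) (hi : (i : ℕ) < 4) : i ≠ s.addNat 4 := Fin.ne_of_val_ne (by simp; omega)
  simp [planeCoord, pderiv_X_of_ne (hne 0 (by norm_num)), pderiv_X_of_ne (hne 1 (by norm_num))]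

theorem pderiv_sum_planeCoord_sq_mul (a b : Fin 4 → k) (t : Fin 4) :
    pderiv (t.addNat 4) (∑ s : Fin 4, planeCoord a b s ^ 2 * X (s.addNat 4)) =
      planeCoord a b t ^ 2 := by
  rw [map_sum, Finset.sum_eq_single t]
  · simp [pderiv_planeCoord]
  · intro s _ hst
    simp [pderiv_planeCoord, pderiv_X_of_ne (mt (Fin.addNat_inj 4).mp hst)]
  · simp

theorem sum_planeCoord_sq_mul_ne_mul {a b : Fin 4 → k} {i j : Fin 4}
    (hij : a i * b j - a j * b i ≠ 0) {G H : MvPolynomial (Fin 8) k}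
    (hG : G.IsWeightedHomogeneous strengthWeight 2)
    (hH : H.IsWeightedHomogeneous strengthWeight 2) :
    ∑ t : Fin 4, planeCoord a b t ^ 2 * X (t.addNat 4) ≠ G * H := by
  intro hE
  have hderiv (t : Fin 4) : planeCoord a b t ^ 2 =
      C (coeff (single (t.addNat 4) 1) G) * H + G * C (coeff (single (t.addNat 4) 1) H) := by
    have hweight : strengthWeight (t.addNat 4) = 2 := by simp [strengthWeight]
    rw [← hweight] at hG hH
    rw [← pderiv_sum_planeCoord_sq_mul, hE, pderiv_mul, hG.pderiv_eq_C strengthWeight_ne_zero,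
      hH.pderiv_eq_C strengthWeight_ne_zero]
  set ψ : MvPolynomial (Fin 8) k →ₐ[k] MvPolynomial (Fin 8) k :=
    aeval fun i => if (i : ℕ) < 4 then X i else 0
  have hψ (t : Fin 4) : ψ (planeCoord a b t) = planeCoord a b t := by
    simp [ψ, planeCoord]
  have hψC (r : k) : ψ (C r) = C r := aeval_C _ _
  have hprod : ψ G * ψ H = 0 := by
    simpa [ψ, hψ] using (congrArg ψ hE).symm
  have hψderiv (t : Fin 4) : planeCoord a b t ^ 2 =
      C (coeff (single (t.addNat 4) 1) G) * ψ H + ψ G * C (coeff (single (t.addNat 4) 1) H) := by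
    simpa only [map_add, map_mul, map_pow, hψ, hψC] using congrArg ψ (hderiv t)
  rcases mul_eq_zero.mp hprod with hG0 | hH0
  · refine false_of_planeCoord_sq_eq_C_mul (Q := ψ H)
      (ν := fun t => coeff (single (t.addNat 4) 1) G) (fun t => ?_) hij
    rw [hψderiv t, hG0, zero_mul, add_zero]
  · refine false_of_planeCoord_sq_eq_C_mul (Q := ψ G)
      (ν := fun t => coeff (single (t.addNat 4) 1) H) (fun t => ?_) hij
    rw [hψderiv t, hH0, mul_zero, zero_add, mul_comm]

end

open MvPolynomial in
/-- In `k[x,y,u,v,f,g,p,q]` with `deg x = deg y = deg u = deg v = 1` and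
`deg f = deg g = deg p = deg q = 2`, there are no weighted-homogeneous polynomials
`x₁, x₂` of degree 1, `q₁, q₂` of degree 3 and `g₁, h₁` of degree 2 with
`x²f + y²g + u²p + v²q = x₁q₁ + x₂q₂ + g₁h₁`. -/
theorem case_b (k : Type*) [Field k] :
    ¬ ∃ x1 x2 q1 q2 g1 h1 : MvPolynomial (Fin 8) k,
      x1.IsWeightedHomogeneous strengthWeight 1 ∧
      x2.IsWeightedHomogeneous strengthWeight 1 ∧
      q1.IsWeightedHomogeneous strengthWeight 3 ∧
      q2.IsWeightedHomogeneous strengthWeight 3 ∧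
      g1.IsWeightedHomogeneous strengthWeight 2 ∧
      h1.IsWeightedHomogeneous strengthWeight 2 ∧
      (X 0 ^ 2 * X 4 + X 1 ^ 2 * X 5 + X 2 ^ 2 * X 6 + X 3 ^ 2 * X 7 :
          MvPolynomial (Fin 8) k) = x1 * q1 + x2 * q2 + g1 * h1 := by
  rintro ⟨x1, x2, q1, q2, g1, h1, hx1, hx2, -, -, hg1, hh1, heq⟩
  obtain ⟨c, rfl⟩ := exists_eq_linear_of_isWeightedHomogeneous_one hx1
  obtain ⟨d, rfl⟩ := exists_eq_linear_of_isWeightedHomogeneous_one hx2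
  obtain ⟨a, b, hca, hcb, hda, hdb, hab⟩ :=
    exists_linearIndependent_pair_dotProduct_eq_zero (by simp) c d
  obtain ⟨i, j, hij⟩ := hab.exists_mul_sub_mul_ne_zero
  apply sum_planeCoord_sq_mul_ne_mul hij (hg1.aeval _ (isWeightedHomogeneous_planeSubst a b))
    (hh1.aeval _ (isWeightedHomogeneous_planeSubst a b))
  have := congrArg (aeval (planeSubst a b)) heq
  rw [aeval_planeSubst_sum_sq_mul, map_add, map_add, map_mul, map_mul, map_mul,
    aeval_planeSubst_linear, aeval_planeSubst_linear, hca, hcb, hda, hdb] at this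
  simpa using this
end

section
/- Let k be any field and consider the polynomial ring k[x,y,u,v,f,g,p,q] graded so that x, y, u, v have degree 1 and f, g, p, q have degree 2. There do not exist weighted-homogeneous polynomials x_1 of degree 1, q_1 of degree 3, and g_1, g_2, h_1, h_2 of degree 2 in this ring such that x²f + y²g + u²p + v²q = x_1q_1 + g_1h_1 + g_2h_2. -/
open Module Submodule

section LinearAlgebra

variable {k V : Type*} [Field k] [AddCommGroup V] [Module k V] {φ₁ ψ₁ φ₂ ψ₂ : Dual k V}

theorem smul_add_smul_add_smul_add_smul_eq_zero (h : ∀ c, φ₁ c * ψ₁ c + φ₂ c * ψ₂ c = 0)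
    (c : V) : ψ₁ c • φ₁ + φ₁ c • ψ₁ + ψ₂ c • φ₂ + φ₂ c • ψ₂ = 0 := by
  ext d
  have hcd := h (c + d)
  simp only [map_add] at hcd
  simp only [LinearMap.add_apply, LinearMap.smul_apply, smul_eq_mul, LinearMap.zero_apply]
  linear_combination hcd - h c - h d

theorem mem_span_singleton_or_mem_span_pair
    (h : ∀ c, ψ₁ c • φ₁ + φ₁ c • ψ₁ + ψ₂ c • φ₂ + φ₂ c • ψ₂ = 0) :
    ψ₁ ∈ span k {φ₁} ∨ φ₁ ∈ span k {φ₂, ψ₂} := by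
  by_cases hker : LinearMap.ker φ₁ ≤ LinearMap.ker ψ₁
  · left
    simpa using mem_span_of_iInf_ker_le_ker (L := fun _ : Unit => φ₁) (by simpa using hker)
  · right
    obtain ⟨c, hφc, hψc⟩ := SetLike.not_le_iff_exists.mp hker
    rw [LinearMap.mem_ker] at hφc hψc
    have hc : ψ₁ c • φ₁ = -(ψ₂ c • φ₂ + φ₂ c • ψ₂) :=
      eq_neg_of_add_eq_zero_left (by simpa [hφc, add_assoc] using h c)
    rw [← smul_mem_iff _ hψc, hc]
    exact neg_mem (add_mem (smul_mem _ _ (subset_span (by simp)))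
      (smul_mem _ _ (subset_span (by simp))))

theorem finrank_span_singleton_le (v : V) : finrank k (span k {v}) ≤ 1 := by
  simpa using finrank_span_le_card (R := k) ({v} : Set V)

theorem finrank_span_pair_le (v w : V) : finrank k (span k {v, w}) ≤ 2 := by
  classical
  exact (finrank_span_le_card (R := k) ({v, w} : Set V)).trans (by simpa using Finset.card_le_two)

theorem finrank_span_pair_le_one_or_le (h : ∀ c, φ₁ c * ψ₁ c + φ₂ c * ψ₂ c = 0) :
    finrank k (span k {φ₁, ψ₁}) ≤ 1 ∨ span k {φ₁, ψ₁} ≤ span k {φ₂, ψ₂} := by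
  have polar := smul_add_smul_add_smul_add_smul_eq_zero h
  rcases mem_span_singleton_or_mem_span_pair polar with hψ | hφ
  · left
    rw [Set.pair_comm, span_insert_eq_span hψ]
    exact finrank_span_singleton_le φ₁
  rcases mem_span_singleton_or_mem_span_pair (φ₁ := ψ₁) (ψ₁ := φ₁) (φ₂ := φ₂) (ψ₂ := ψ₂)
    (fun c => by rw [add_comm (φ₁ c • ψ₁)]; exact polar c) with hφ' | hψ
  · left
    rw [span_insert_eq_span hφ']
    exact finrank_span_singleton_le ψ₁
  · right
    rw [span_le, Set.insert_subset_iff, Set.singleton_subset_iff]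
    exact ⟨hφ, hψ⟩

theorem finrank_span_pair_sup_span_pair_le_two (h : ∀ c, φ₁ c * ψ₁ c + φ₂ c * ψ₂ c = 0) :
    finrank k ↥(span k {φ₁, ψ₁} ⊔ span k {φ₂, ψ₂}) ≤ 2 := by
  rcases finrank_span_pair_le_one_or_le h with h₁ | h₁
  · rcases finrank_span_pair_le_one_or_le (fun c => (add_comm _ _).trans (h c)) with h₂ | h₂
    · have := FiniteDimensional.span_of_finite k (Set.toFinite {φ₁, ψ₁})
      have := FiniteDimensional.span_of_finite k (Set.toFinite {φ₂, ψ₂})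
      exact (finrank_add_le_finrank_add_finrank _ _).trans (by omega)
    · rw [sup_eq_left.mpr h₂]
      omega
  · rw [sup_eq_right.mpr h₁]
    exact finrank_span_pair_le φ₂ ψ₂

theorem finrank_le_one_of_sum_mul_sq_eq_zero {ι : Type*} [Fintype ι] (a : Dual k (ι → k))
    (K : Submodule k (ι → k)) (hK : ∀ c ∈ K, ∀ p, a p = 0 → ∑ j, c j * p j ^ 2 = 0) :
    finrank k K ≤ 1 := by
  classical
  by_cases ha : ∃ i, a (Pi.single i 1) ≠ 0
  · obtain ⟨i, hi⟩ := ha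
    have hinj : Function.Injective ((LinearMap.proj i).comp K.subtype) := by
      rw [← LinearMap.ker_eq_bot, LinearMap.ker_eq_bot']
      rintro ⟨c, hc⟩ hci
      simp only [LinearMap.comp_apply, subtype_apply, LinearMap.proj_apply] at hci
      ext j
      by_cases hji : j = i
      · simpa [hji] using hci
      have := hK c hc (a (Pi.single i 1) • Pi.single j 1 - a (Pi.single j 1) • Pi.single i 1)
        (by simp [mul_comm])
      rw [Fintype.sum_eq_add j i hji (fun m ⟨hmj, hmi⟩ => by simp [hmj, hmi])] at this
      simpa [hji, Ne.symm hji, hci, hi] using this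
    simpa using LinearMap.finrank_le_finrank_of_injective hinj
  · push Not at ha
    have : K = ⊥ := by
      refine eq_bot_iff.mpr fun c hc => (mem_bot k).mpr (funext fun j => ?_)
      have := hK c hc (Pi.single j 1) (ha j)
      rwa [Fintype.sum_eq_single j (fun m hm => by simp [hm]), Pi.single_eq_same, one_pow,
        mul_one] at this
    rw [this, finrank_bot]
    exact zero_le_one

end LinearAlgebra

section Restriction

open Polynomial

variable {R : Type*} [CommRing R]

theorem coeffs_of_C_mul_X_eq {s u : R} {Q G₁ H₁ G₂ H₂ : R[X]} (hQ : Q.natDegree ≤ 1)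
    (hG₁ : G₁.natDegree ≤ 1) (hH₁ : H₁.natDegree ≤ 1) (hG₂ : G₂.natDegree ≤ 1)
    (hH₂ : H₂.natDegree ≤ 1) (h : C s * X = C u * Q + G₁ * H₁ + G₂ * H₂) :
    G₁.coeff 1 * H₁.coeff 1 + G₂.coeff 1 * H₂.coeff 1 = 0 ∧
      s = u * Q.coeff 1 + (G₁.coeff 0 * H₁.coeff 1 + G₁.coeff 1 * H₁.coeff 0) +
        (G₂.coeff 0 * H₂.coeff 1 + G₂.coeff 1 * H₂.coeff 0) := by
  constructor
  · have h2 := congrArg (coeff · 2) h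
    rwa [eq_comm, coeff_add, coeff_add, coeff_C_mul, coeff_eq_zero_of_natDegree_lt (by omega),
      mul_zero, zero_add, coeff_C_mul_X, if_neg (by decide),
      coeff_mul_add_eq_of_natDegree_le (df := 1) (dg := 1) hG₁ hH₁,
      coeff_mul_add_eq_of_natDegree_le (df := 1) (dg := 1) hG₂ hH₂] at h2
  · have h1 := congrArg (coeff · 1) h
    simpa [coeff_mul, Finset.Nat.antidiagonal_succ] using h1

variable {k : Type*} [Field k]

noncomputable def lineEval (p c : Fin 4 → k) : MvPolynomial (Fin 8) k →ₐ[k] k[X] :=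
  MvPolynomial.aeval ![C (p 0), C (p 1), C (p 2), C (p 3),
    C (c 0) * X, C (c 1) * X, C (c 2) * X, C (c 3) * X]

theorem weight_strengthWeight (m : Fin 8 →₀ ℕ) :
    Finsupp.weight strengthWeight m = m 0 + m 1 + m 2 + m 3 + 2 * (m 4 + m 5 + m 6 + m 7) := by
  rw [Finsupp.weight_apply, Finsupp.sum_fintype _ _ (by simp), Fin.sum_univ_eight]
  norm_num [strengthWeight]
  ring

theorem lineEval_monomial (p c : Fin 4 → k) (m : Fin 8 →₀ ℕ) (r : k) :
    lineEval p c (MvPolynomial.monomial m r) =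
      C (r * (p 0 ^ m 0 * p 1 ^ m 1 * p 2 ^ m 2 * p 3 ^ m 3 *
        c 0 ^ m 4 * c 1 ^ m 5 * c 2 ^ m 6 * c 3 ^ m 7)) * X ^ (m 4 + m 5 + m 6 + m 7) := by
  simp only [lineEval, MvPolynomial.aeval_monomial, Polynomial.algebraMap_eq, Finsupp.prod_pow,
    Fin.prod_univ_eight, Matrix.cons_val, mul_pow, map_mul, map_pow, pow_add]
  ring

theorem lineEval_strengthForm (p c : Fin 4 → k) :
    lineEval p c (MvPolynomial.X 0 ^ 2 * MvPolynomial.X 4 + MvPolynomial.X 1 ^ 2 *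
      MvPolynomial.X 5 + MvPolynomial.X 2 ^ 2 * MvPolynomial.X 6 +
      MvPolynomial.X 3 ^ 2 * MvPolynomial.X 7) =
      C (∑ j, c j * p j ^ 2) * X := by
  simp only [lineEval, map_add, map_mul, map_pow, MvPolynomial.aeval_X, Matrix.cons_val,
    Fin.sum_univ_four]
  ring

variable {φ : MvPolynomial (Fin 8) k}

theorem natDegree_lineEval_le {d : ℕ} (hφ : φ.IsWeightedHomogeneous strengthWeight d)
    (p c : Fin 4 → k) : (lineEval p c φ).natDegree ≤ d / 2 := by
  rw [φ.as_sum, map_sum]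
  refine natDegree_sum_le_of_forall_le _ _ fun m hm => ?_
  have hw := hφ (MvPolynomial.mem_support_iff.mp hm)
  rw [weight_strengthWeight] at hw
  rw [lineEval_monomial]
  exact (natDegree_C_mul_X_pow_le _ _).trans (by omega)

theorem exists_lineEval_eq_C (hφ : φ.IsWeightedHomogeneous strengthWeight 1) :
    ∃ a : Dual k (Fin 4 → k), ∀ p c, lineEval p c φ = C (a p) := by
  rw [φ.as_sum]
  refine Finset.sum_induction _
    (fun ψ => ∃ a : Dual k (Fin 4 → k), ∀ p c, lineEval p c ψ = C (a p))
    (fun _ _ ⟨a, ha⟩ ⟨b, hb⟩ => ⟨a + b, by simp [ha, hb]⟩) ⟨0, by simp⟩ fun m hm => ?_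
  have hw := hφ (MvPolynomial.mem_support_iff.mp hm)
  rw [weight_strengthWeight] at hw
  obtain ⟨h4, h5, h6, h7⟩ : m 4 = 0 ∧ m 5 = 0 ∧ m 6 = 0 ∧ m 7 = 0 := by omega
  let e : Fin 4 → Dual k (Fin 4 → k) := LinearMap.proj
  refine ⟨MvPolynomial.coeff m φ • (m 0 • e 0 + m 1 • e 1 + m 2 • e 2 + m 3 • e 3), fun p c => ?_⟩
  obtain ⟨h0, h1, h2, h3⟩ | ⟨h0, h1, h2, h3⟩ | ⟨h0, h1, h2, h3⟩ | ⟨h0, h1, h2, h3⟩ :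
      (m 0 = 1 ∧ m 1 = 0 ∧ m 2 = 0 ∧ m 3 = 0) ∨ (m 0 = 0 ∧ m 1 = 1 ∧ m 2 = 0 ∧ m 3 = 0) ∨
      (m 0 = 0 ∧ m 1 = 0 ∧ m 2 = 1 ∧ m 3 = 0) ∨ (m 0 = 0 ∧ m 1 = 0 ∧ m 2 = 0 ∧ m 3 = 1) := by
    omega
  all_goals simp [e, lineEval_monomial, *]

theorem exists_coeff_one_lineEval (hφ : φ.IsWeightedHomogeneous strengthWeight 2) :
    ∃ ℓ : Dual k (Fin 4 → k), ∀ p c, (lineEval p c φ).coeff 1 = ℓ c := by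
  rw [φ.as_sum]
  refine Finset.sum_induction _
    (fun ψ => ∃ ℓ : Dual k (Fin 4 → k), ∀ p c, (lineEval p c ψ).coeff 1 = ℓ c)
    (fun _ _ ⟨a, ha⟩ ⟨b, hb⟩ => ⟨a + b, by simp [ha, hb]⟩) ⟨0, by simp⟩ fun m hm => ?_
  have hw := hφ (MvPolynomial.mem_support_iff.mp hm)
  rw [weight_strengthWeight] at hw
  by_cases hz : m 4 + m 5 + m 6 + m 7 = 1
  · obtain ⟨h0, h1, h2, h3⟩ : m 0 = 0 ∧ m 1 = 0 ∧ m 2 = 0 ∧ m 3 = 0 := by omega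
    let e : Fin 4 → Dual k (Fin 4 → k) := LinearMap.proj
    refine ⟨MvPolynomial.coeff m φ • (m 4 • e 0 + m 5 • e 1 + m 6 • e 2 + m 7 • e 3),
      fun p c => ?_⟩
    obtain ⟨h4, h5, h6, h7⟩ | ⟨h4, h5, h6, h7⟩ | ⟨h4, h5, h6, h7⟩ | ⟨h4, h5, h6, h7⟩ :
        (m 4 = 1 ∧ m 5 = 0 ∧ m 6 = 0 ∧ m 7 = 0) ∨ (m 4 = 0 ∧ m 5 = 1 ∧ m 6 = 0 ∧ m 7 = 0) ∨
        (m 4 = 0 ∧ m 5 = 0 ∧ m 6 = 1 ∧ m 7 = 0) ∨ (m 4 = 0 ∧ m 5 = 0 ∧ m 6 = 0 ∧ m 7 = 1) := by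
      omega
    all_goals simp [e, lineEval_monomial, *]
  · exact ⟨0, fun p c => by rw [lineEval_monomial, coeff_C_mul_X_pow, if_neg (Ne.symm hz)]; rfl⟩

end Restriction

open MvPolynomial in
/-- In `k[x,y,u,v,f,g,p,q]` with `deg x = deg y = deg u = deg v = 1` and
`deg f = deg g = deg p = deg q = 2`, there are no weighted-homogeneous polynomials
`x₁` of degree 1, `q₁` of degree 3 and `g₁, g₂, h₁, h₂` of degree 2 with
`x²f + y²g + u²p + v²q = x₁q₁ + g₁h₁ + g₂h₂`. -/
theorem case_c (k : Type*) [Field k] :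
    ¬ ∃ x1 q1 g1 g2 h1 h2 : MvPolynomial (Fin 8) k,
      x1.IsWeightedHomogeneous strengthWeight 1 ∧
      q1.IsWeightedHomogeneous strengthWeight 3 ∧
      g1.IsWeightedHomogeneous strengthWeight 2 ∧
      g2.IsWeightedHomogeneous strengthWeight 2 ∧
      h1.IsWeightedHomogeneous strengthWeight 2 ∧
      h2.IsWeightedHomogeneous strengthWeight 2 ∧
      (X 0 ^ 2 * X 4 + X 1 ^ 2 * X 5 + X 2 ^ 2 * X 6 + X 3 ^ 2 * X 7 :
          MvPolynomial (Fin 8) k) = x1 * q1 + g1 * h1 + g2 * h2 := by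
  rintro ⟨x1, q1, g1, g2, h1, h2, hx1, hq1, hg1, hg2, hh1, hh2, hE⟩
  obtain ⟨a, ha⟩ := exists_lineEval_eq_C hx1
  obtain ⟨φ₁, hφ₁⟩ := exists_coeff_one_lineEval hg1
  obtain ⟨ψ₁, hψ₁⟩ := exists_coeff_one_lineEval hh1
  obtain ⟨φ₂, hφ₂⟩ := exists_coeff_one_lineEval hg2
  obtain ⟨ψ₂, hψ₂⟩ := exists_coeff_one_lineEval hh2
  have hrestrict (p c : Fin 4 → k) :
      Polynomial.C (∑ j, c j * p j ^ 2) * Polynomial.X = Polynomial.C (a p) * lineEval p c q1 +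
        lineEval p c g1 * lineEval p c h1 + lineEval p c g2 * lineEval p c h2 := by
    rw [← lineEval_strengthForm, hE, map_add, map_add, map_mul, map_mul, map_mul, ha]
  have hcoeffs (p c : Fin 4 → k) :=
    coeffs_of_C_mul_X_eq (natDegree_lineEval_le hq1 p c) (natDegree_lineEval_le hg1 p c)
      (natDegree_lineEval_le hh1 p c) (natDegree_lineEval_le hg2 p c)
      (natDegree_lineEval_le hh2 p c) (hrestrict p c)
  have hquad (c : Fin 4 → k) : φ₁ c * ψ₁ c + φ₂ c * ψ₂ c = 0 := by
    simpa [hφ₁, hψ₁, hφ₂, hψ₂] using (hcoeffs 0 c).1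
  set S := span k {φ₁, ψ₁} ⊔ span k {φ₂, ψ₂}
  have hS : finrank k S ≤ 2 := finrank_span_pair_sup_span_pair_le_two hquad
  have hdim := Subspace.finrank_add_finrank_dualCoannihilator_eq S
  rw [finrank_fin_fun] at hdim
  have : finrank k S.dualCoannihilator ≤ 1 := by
    refine finrank_le_one_of_sum_mul_sq_eq_zero a _ fun c hc p hp => ?_
    rw [mem_dualCoannihilator] at hc
    have h₁ := hc φ₁ (mem_sup_left (subset_span (by simp)))
    have h₂ := hc ψ₁ (mem_sup_left (subset_span (by simp)))
    have h₃ := hc φ₂ (mem_sup_right (subset_span (by simp)))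
    have h₄ := hc ψ₂ (mem_sup_right (subset_span (by simp)))
    simpa [hφ₁, hψ₁, hφ₂, hψ₂, h₁, h₂, h₃, h₄, hp] using (hcoeffs p c).2
  omega
end

section
/- Let k be a field, n a positive integer, x, y, u, v homogeneous polynomials of degree 1 and f, g, p, q homogeneous polynomials of degree 2 in k[x_1,…,x_n], and let t ∈ k with t ≠ 0. Then the degree-4 form x²f + y²g + u²p + v²q + t·(fg − pq) has strength at most 3; indeed t·(x²f + y²g + u²p + v²q + t·(fg − pq)) = (x² + tg)(y² + tf) − (u² − tq)(v² − tp) − (xy + uv)(xy − uv), which exhibits it as a sum of three products of homogeneous quadrics. In particular, x²f + y²g + u²p + v²q is the limit as t → 0 of forms of strength at most 3. -/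
/-- `F` admits a strength decomposition of length `r` in the standard-graded polynomial
ring `k[x_1,…,x_n]`: an expression `F = ∑ i, g i * h i` where each `g i`, `h i` is
homogeneous of some degree between `1` and `d - 1`. -/
def HasStrengthDecompOfLength {n : ℕ} {k : Type*} [CommRing k]
    (d r : ℕ) (F : MvPolynomial (Fin n) k) : Prop :=
  ∃ (g h : Fin r → MvPolynomial (Fin n) k) (a b : Fin r → ℕ),
    (∀ i, 1 ≤ a i ∧ a i ≤ d - 1 ∧ (g i).IsHomogeneous (a i)) ∧
    (∀ i, 1 ≤ b i ∧ b i ≤ d - 1 ∧ (h i).IsHomogeneous (b i)) ∧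
    F = ∑ i, g i * h i

open MvPolynomial in
/-- For `t ≠ 0`, the degree-4 form `x²f + y²g + u²p + v²q + t(fg - pq)` has strength at
most 3; indeed `t` times it equals
`(x² + tg)(y² + tf) - (u² - tq)(v² - tp) - (xy + uv)(xy - uv)`,
a sum of three products of homogeneous quadrics. -/
theorem strength_le_three_of_perturbation (k : Type*) [Field k] (n : ℕ) (hn : 0 < n)
    (x y u v f g p q : MvPolynomial (Fin n) k)
    (hx : x.IsHomogeneous 1) (hy : y.IsHomogeneous 1)
    (hu : u.IsHomogeneous 1) (hv : v.IsHomogeneous 1)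
    (hf : f.IsHomogeneous 2) (hg : g.IsHomogeneous 2)
    (hp : p.IsHomogeneous 2) (hq : q.IsHomogeneous 2)
    (t : k) (ht : t ≠ 0) :
    HasStrengthDecompOfLength 4 3
      (x ^ 2 * f + y ^ 2 * g + u ^ 2 * p + v ^ 2 * q + C t * (f * g - p * q)) ∧
    C t * (x ^ 2 * f + y ^ 2 * g + u ^ 2 * p + v ^ 2 * q + C t * (f * g - p * q)) =
      (x ^ 2 + C t * g) * (y ^ 2 + C t * f) - (u ^ 2 - C t * q) * (v ^ 2 - C t * p)
        - (x * y + u * v) * (x * y - u * v) := by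

  have key : C (σ := Fin n) t * (x ^ 2 * f + y ^ 2 * g + u ^ 2 * p + v ^ 2 * q + C t * (f * g - p * q)) =
      (x ^ 2 + C t * g) * (y ^ 2 + C t * f) - (u ^ 2 - C t * q) * (v ^ 2 - C t * p)
        - (x * y + u * v) * (x * y - u * v) := by ring
  refine ⟨?_, key⟩
  have hinv : (C t⁻¹ : MvPolynomial (Fin n) k) * C t = 1 := by
    rw [← C_mul, inv_mul_cancel₀ ht, C_1]
  refine ⟨![C t⁻¹ * (x ^ 2 + C t * g), -(C t⁻¹ * (u ^ 2 - C t * q)),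
      -(C t⁻¹ * (x * y + u * v))],
    ![y ^ 2 + C t * f, v ^ 2 - C t * p, x * y - u * v],
    fun _ => 2, fun _ => 2, ?_, ?_, ?_⟩
  · intro i
    refine ⟨by norm_num, by norm_num, ?_⟩
    fin_cases i <;> simp only [Matrix.cons_val_zero, Matrix.cons_val_one, Matrix.head_cons,
      Matrix.cons_val_two, Matrix.tail_cons]
    · exact ((isHomogeneous_C _ _).mul ((hx.pow 2).add ((isHomogeneous_C _ _).mul hg)))
    · exact (((isHomogeneous_C _ _).mul ((hu.pow 2).sub ((isHomogeneous_C _ _).mul hq)))).neg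
    · exact (((isHomogeneous_C _ _).mul ((hx.mul hy).add (hu.mul hv)))).neg
  · intro i
    refine ⟨by norm_num, by norm_num, ?_⟩
    fin_cases i <;> simp only [Matrix.cons_val_zero, Matrix.cons_val_one, Matrix.head_cons,
      Matrix.cons_val_two, Matrix.tail_cons]
    · exact (hy.pow 2).add ((isHomogeneous_C _ _).mul hf)
    · exact (hv.pow 2).sub ((isHomogeneous_C _ _).mul hp)
    · exact (hx.mul hy).sub (hu.mul hv)
  · have := congrArg (fun z => (C t⁻¹ : MvPolynomial (Fin n) k) * z) key
    simp only [← mul_assoc, hinv, one_mul] at this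
    rw [this, Fin.sum_univ_three]
    simp only [Matrix.cons_val_zero, Matrix.cons_val_one, Matrix.head_cons,
      Matrix.cons_val_two, Matrix.tail_cons]
    ring
end

section
/- Let k be an infinite field, n a positive integer, x, y, u, v homogeneous polynomials of degree 1 and f, g, p, q homogeneous polynomials of degree 2 in k[x_1,…,x_n], and set h = x²f + y²g + u²p + v²q. Identify the vector space of degree-4 forms in k[x_1,…,x_n] with k^N via coefficients in the monomial basis. Then every polynomial function P on k^N that vanishes at (the coefficient vector of) every degree-4 form of strength at most 3 also vanishes at h. In other words, h lies in the Zariski closure of the set of degree-4 forms of strength at most 3. -/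
/-!
For `t ≠ 0` the quartic `h + t (pf - qg)` has strength at most `3`, by the identity
`h + t (pf - qg) = (x² + tp)(f + t⁻¹u²) + (y² - tq)(g - t⁻¹v²) - t⁻¹(xu - yv)(xu + yv)`.
So `P` vanishes on the punctured line `t ↦ h + t (pf - qg)` in the space of quartics;
its restriction to that line is a univariate polynomial with infinitely many roots, hence
zero, and evaluating it at `t = 0` gives `P(h) = 0`.
-/

open MvPolynomial

theorem MvPolynomial.eval_eq_zero_of_forall_ne_zero_eval_add_smul_eq_zero
    {σ k : Type*} [Field k] [Infinite k] (P : MvPolynomial σ k) (a b : σ → k)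
    (h : ∀ t : k, t ≠ 0 → eval (a + t • b) P = 0) : eval a P = 0 := by
  set ψ : Polynomial k := aeval (fun i => Polynomial.C (a i) + Polynomial.C (b i) * Polynomial.X) P
  have eval_ψ : ∀ t : k, ψ.eval t = eval (a + t • b) P := fun t => by
    rw [← Polynomial.coe_evalRingHom, map_aeval]
    have hk : (Polynomial.evalRingHom t).comp (algebraMap k (Polynomial k)) = RingHom.id k := by
      ext; simp
    simp only [hk, Polynomial.coe_evalRingHom, Polynomial.eval_add, Polynomial.eval_C,
      Polynomial.eval_mul, Polynomial.eval_X]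
    show eval _ P = _
    congr 2; funext i; simp [mul_comm]
  have hψ : ψ = 0 := by
    refine Polynomial.eq_zero_of_infinite_isRoot ψ
      ((Set.finite_singleton (0 : k)).infinite_compl.mono fun t ht => ?_)
    simpa [Polynomial.IsRoot, eval_ψ] using h t ht
  simpa [hψ] using (eval_ψ 0).symm

section Strength

variable {n : ℕ} {k : Type*} [CommRing k]

theorem MvPolynomial.isHomogeneous_sum_mul {r a b : ℕ} {g h : Fin r → MvPolynomial (Fin n) k}
    (hg : ∀ i, (g i).IsHomogeneous a) (hh : ∀ i, (h i).IsHomogeneous b) :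
    (∑ i, g i * h i).IsHomogeneous (a + b) :=
  IsHomogeneous.sum _ _ _ fun i _ => (hg i).mul (hh i)

theorem hasStrengthDecompOfLength_sum_mul {d r a b : ℕ} {g h : Fin r → MvPolynomial (Fin n) k}
    (ha : 1 ≤ a ∧ a ≤ d - 1) (hb : 1 ≤ b ∧ b ≤ d - 1)
    (hg : ∀ i, (g i).IsHomogeneous a) (hh : ∀ i, (h i).IsHomogeneous b) :
    HasStrengthDecompOfLength d r (∑ i, g i * h i) :=
  ⟨g, h, fun _ => a, fun _ => b, fun i => ⟨ha.1, ha.2, hg i⟩, fun i => ⟨hb.1, hb.2, hh i⟩, rfl⟩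

end Strength

theorem sq_mul_add_sq_mul_add_sq_mul_add_sq_mul_add_mul_eq {R : Type*} [CommRing R]
    (x y u v f g p q s t : R) (hst : s * t = 1) :
    x ^ 2 * f + y ^ 2 * g + u ^ 2 * p + v ^ 2 * q + t * (p * f - q * g) =
      (x ^ 2 + t * p) * (f + s * u ^ 2) + (y ^ 2 - t * q) * (g - s * v ^ 2) +
        -(s * (x * u - y * v)) * (x * u + y * v) := by
  linear_combination -(p * u ^ 2 + q * v ^ 2) * hst

open MvPolynomial in
theorem mem_zariski_closure_of_strength_le_three_general (k : Type*) [Field k] [Infinite k]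
    (n : ℕ)
    (x y u v f g p q : MvPolynomial (Fin n) k)
    (hx : x.IsHomogeneous 1) (hy : y.IsHomogeneous 1)
    (hu : u.IsHomogeneous 1) (hv : v.IsHomogeneous 1)
    (hf : f.IsHomogeneous 2) (hg : g.IsHomogeneous 2)
    (hp : p.IsHomogeneous 2) (hq : q.IsHomogeneous 2)
    (P : MvPolynomial {d : Fin n →₀ ℕ // (d.sum fun _ e => e) = 4} k)
    (hP : ∀ F : MvPolynomial (Fin n) k, F.IsHomogeneous 4 →
      HasStrengthDecompOfLength 4 3 F →
      MvPolynomial.eval (fun d => F.coeff d.1) P = 0) :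
    MvPolynomial.eval
      (fun d => (x ^ 2 * f + y ^ 2 * g + u ^ 2 * p + v ^ 2 * q).coeff d.1) P = 0 := by
  refine eval_eq_zero_of_forall_ne_zero_eval_add_smul_eq_zero P _
    (fun d => (p * f - q * g).coeff d.1) fun t ht => ?_
  have hC : ∀ c : k, (C c : MvPolynomial (Fin n) k).IsHomogeneous 0 := isHomogeneous_C _
  set G := ![x ^ 2 + C t * p, y ^ 2 - C t * q, -(C t⁻¹ * (x * u - y * v))]
  set H := ![f + C t⁻¹ * u ^ 2, g - C t⁻¹ * v ^ 2, x * u + y * v]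
  have hG : ∀ i, (G i).IsHomogeneous 2 := by
    intro i; fin_cases i
    · exact (hx.pow 2).add (by simpa using (hC t).mul hp)
    · exact (hy.pow 2).sub (by simpa using (hC t).mul hq)
    · simpa [G] using ((hC t⁻¹).mul ((hx.mul hu).sub (hy.mul hv))).neg
  have hH : ∀ i, (H i).IsHomogeneous 2 := by
    intro i; fin_cases i
    · exact hf.add (by simpa using (hC t⁻¹).mul (hu.pow 2))
    · exact hg.sub (by simpa using (hC t⁻¹).mul (hv.pow 2))
    · exact (hx.mul hu).add (hy.mul hv)
  have hsum : x ^ 2 * f + y ^ 2 * g + u ^ 2 * p + v ^ 2 * q + C t * (p * f - q * g) =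
      ∑ i, G i * H i := by
    simpa [Fin.sum_univ_three, G, H] using sq_mul_add_sq_mul_add_sq_mul_add_sq_mul_add_mul_eq
      x y u v f g p q (C t⁻¹) (C t) (by rw [← C_mul, inv_mul_cancel₀ ht, C_1])
  have key := hP _ (hsum ▸ isHomogeneous_sum_mul hG hH)
    (hsum ▸ hasStrengthDecompOfLength_sum_mul (by norm_num) (by norm_num) hG hH)
  convert key using 3
  funext d
  simp [coeff_C_mul]

open MvPolynomial in
/-- Over an infinite field, the quartic `h = x²f + y²g + u²p + v²q` lies in the Zariski
closure of the set of degree-4 forms of strength at most 3: identifying the space of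
degree-4 forms with the space of coefficient vectors (indexed by the exponent vectors of
total degree 4), every polynomial function `P` that vanishes at the coefficient vector of
every degree-4 form of strength at most 3 also vanishes at the coefficient vector of `h`. -/
theorem mem_zariski_closure_of_strength_le_three (k : Type*) [Field k] [Infinite k]
    (n : ℕ) (hn : 0 < n)
    (x y u v f g p q : MvPolynomial (Fin n) k)
    (hx : x.IsHomogeneous 1) (hy : y.IsHomogeneous 1)
    (hu : u.IsHomogeneous 1) (hv : v.IsHomogeneous 1)
    (hf : f.IsHomogeneous 2) (hg : g.IsHomogeneous 2)
    (hp : p.IsHomogeneous 2) (hq : q.IsHomogeneous 2)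
    (P : MvPolynomial {d : Fin n →₀ ℕ // (d.sum fun _ e => e) = 4} k)
    (hP : ∀ F : MvPolynomial (Fin n) k, F.IsHomogeneous 4 →
      HasStrengthDecompOfLength 4 3 F →
      MvPolynomial.eval (fun d => F.coeff d.1) P = 0) :
    MvPolynomial.eval
      (fun d => (x ^ 2 * f + y ^ 2 * g + u ^ 2 * p + v ^ 2 * q).coeff d.1) P = 0 :=
  mem_zariski_closure_of_strength_le_three_general k n x y u v f g p q hx hy hu hv hf hg hp hq P hP
end

section
/- Let k be a field, let e ≥ 2 and k_e ≥ 1 be integers, and let π : {1,…,k_e} × {1,…,e} × ℕ → ℕ be an injective map. In the formal power series ring k[[x_i : i ∈ ℕ]], define for j = 1,…,k_e the homogeneous degree-e series f_j = Σ_{i∈ℕ} x_{π(j,1,i)} x_{π(j,2,i)} ⋯ x_{π(j,e,i)}. Then for every tuple (λ_1,…,λ_{k_e}) ∈ k^{k_e} with not all λ_j zero, the series λ_1 f_1 + … + λ_{k_e} f_{k_e} admits no strength decomposition, i.e., it cannot be written as a finite sum Σ_{j=1}^r G_j H_j where each G_j, H_j is a homogeneous power series of degree strictly between 0 and e. -/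
/-!
Pick `j₀` with `λ_{j₀} ≠ 0` and read off coefficients at the squarefree monomials
`x_{π(j₀,1,c₁)} ⋯ x_{π(j₀,e,c_e)}`, `c ∈ ℕ^e`. On the left-hand side they form the diagonal
tensor of order `e` with constant diagonal `λ_{j₀}`. On the right-hand side, `G_t H_t`
contributes, for every nonempty proper set `B` of slots, the product of a tensor in the slots
`B` (coefficients of `G_t`) and one in the complementary slots (coefficients of `H_t`); the
terms with `B = ∅` or all slots vanish since `G_t`, `H_t` have no constant term. A diagonal
tensor with `n` nonzero diagonal entries is not a sum of fewer than `n` such products, so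
restricting `c` to `{0, …, N}^e` with `N` the number of products gives a contradiction.
-/

open scoped Classical

/-- A formal power series in `k[[x_i : i ∈ ℕ]]` is homogeneous of degree `e` if every
monomial in its support has total degree `e`. -/
def MvPowerSeriesIsHomogeneous {k : Type*} [CommSemiring k]
    (F : MvPowerSeries ℕ k) (e : ℕ) : Prop :=
  ∀ d : ℕ →₀ ℕ, MvPowerSeries.coeff d F ≠ 0 → (d.sum fun _ n => n) = e

open Finset Function Module

section Support

variable {k X : Type*} [Field k]

theorem Submodule.exists_mem_card_support_gt (W : Submodule k (X →₀ k)) [FiniteDimensional k W]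
    {w : X →₀ k} (hw : w ∈ W) (h : #w.support < finrank k W) :
    ∃ w' ∈ W, #w.support < #w'.support := by
  let restrict : W →ₗ[k] (w.support → k) :=
    (LinearMap.pi fun i : w.support => Finsupp.lapply i.1) ∘ₗ W.subtype
  obtain ⟨v, hv, hv0⟩ := Submodule.exists_mem_ne_zero_of_ne_bot
    (LinearMap.ker_ne_bot_of_finrank_lt (K := k) (V := W) (V₂ := w.support → k) (f := restrict)
      (by simpa using h))
  have hdisj : Disjoint w.support (v : X →₀ k).support := disjoint_left.mpr fun i hi =>
    Finsupp.notMem_support_iff.mpr (congrFun (LinearMap.mem_ker.mp hv) ⟨i, hi⟩)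
  refine ⟨w + v, W.add_mem hw v.2, ?_⟩
  rw [Finsupp.support_add_eq hdisj, card_union_of_disjoint hdisj, lt_add_iff_pos_right,
    card_pos, Finsupp.support_nonempty_iff]
  exact_mod_cast hv0

theorem Submodule.exists_mem_finrank_le_card_support (W : Submodule k (X →₀ k))
    [FiniteDimensional k W] : ∃ w ∈ W, finrank k W ≤ #w.support := by
  suffices ∀ m ≤ finrank k W, ∃ w ∈ W, m ≤ #w.support from this _ le_rfl
  intro m
  induction m with
  | zero => exact fun _ => ⟨0, W.zero_mem, le_rfl⟩
  | succ m ih =>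
    intro hm
    obtain ⟨w, hw, hmw⟩ := ih (by omega)
    rcases hmw.lt_or_eq with hlt | rfl
    · exact ⟨w, hw, hlt⟩
    · exact W.exists_mem_card_support_gt hw hm

theorem Finset.exists_orthogonal_finsupp_card_support_ge {τ : Type*} (A : Finset X)
    (T : Finset τ) (ψ : τ → X → k) :
    ∃ φ : X →₀ k, φ.support ⊆ A ∧ (∀ p ∈ T, ∑ x ∈ A, φ x * ψ p x = 0) ∧
      #A ≤ #T + #φ.support := by
  let Φ : (A →₀ k) →ₗ[k] (T → k) := Finsupp.linearCombination k fun (x : A) (p : T) => ψ p x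
  let embed : (A →₀ k) →ₗ[k] (X →₀ k) := Finsupp.lmapDomain k k Subtype.val
  have hembed : Injective embed := Finsupp.mapDomain_injective Subtype.val_injective
  have hrank : #A ≤ #T + finrank k (LinearMap.ker Φ) := by
    have := Φ.finrank_range_add_finrank_ker
    have := (LinearMap.range Φ).finrank_le
    simp only [finrank_fintype_fun_eq_card, finrank_finsupp_self, Fintype.card_coe] at *
    omega
  obtain ⟨φ, hφ, hcard⟩ := ((LinearMap.ker Φ).map embed).exists_mem_finrank_le_card_support
  obtain ⟨φ₀, hφ₀, rfl⟩ := Submodule.mem_map.mp hφ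
  have hembed_apply (x : A) : embed φ₀ x = φ₀ x :=
    Finsupp.mapDomain_apply Subtype.val_injective _ _
  refine ⟨embed φ₀, ?_, fun p hp => ?_, ?_⟩
  · refine Finsupp.mapDomain_support.trans fun x hx => ?_
    obtain ⟨a, -, rfl⟩ := Finset.mem_image.mp hx
    exact a.2
  · have := congrFun (LinearMap.mem_ker.mp hφ₀) ⟨p, hp⟩
    rw [Finsupp.linearCombination_apply, Finsupp.sum_fintype _ _ (by simp)] at this
    simp only [Finset.sum_apply, Pi.smul_apply, smul_eq_mul, Pi.zero_apply] at this
    rw [← Finset.sum_coe_sort A]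
    simpa only [hembed_apply] using this
  · rw [(Submodule.equivMapOfInjective embed hembed _).finrank_eq.symm] at hcard
    omega

end Support

theorem DependsOn.apply_update_of_notMem {ι X β : Type*} [DecidableEq ι] {f : (ι → X) → β}
    {s : Set ι} (hf : DependsOn f s) {l : ι} (hl : l ∉ s) (c : ι → X) (x : X) :
    f (Function.update c l x) = f c :=
  hf fun _ hi => update_of_ne (ne_of_mem_of_not_mem hi hl) x c

section Tensor

variable {k ι X τ : Type*} [Field k]

/-- A tensor with slots `C` and indices in `A` is modelled as a function of `c : ι → X`, of
which only the restriction to `C` is meant to matter. -/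
def IsNondegenerateDiagonal (C : Finset ι) (A : Finset X) (T : (ι → X) → k) : Prop :=
  (∀ a ∈ A, T (fun _ => a) ≠ 0) ∧
    ∀ c : ι → X, (∀ l ∈ C, c l ∈ A) → (∃ l ∈ C, ∃ l' ∈ C, c l ≠ c l') → T c = 0

variable [DecidableEq ι]

theorem IsNondegenerateDiagonal.contract {C : Finset ι} {A : Finset X} {T : (ι → X) → k}
    {l : ι} (hT : IsNondegenerateDiagonal (insert l C) A T) (hl : l ∉ C) (hC : C.Nonempty)
    {φ : X →₀ k} (hφ : φ.support ⊆ A) :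
    IsNondegenerateDiagonal C φ.support fun c => ∑ x ∈ A, φ x * T (update c l x) := by
  have hupd (c : ι → X) (x : X) {l'} (hl' : l' ∈ C) : update c l x l' = c l' :=
    update_of_ne (ne_of_mem_of_not_mem hl' hl) x c
  have hvalues (c : ι → X) {x} (hx : x ∈ A) (hc : ∀ l' ∈ C, c l' ∈ A) :
      ∀ l' ∈ insert l C, update c l x l' ∈ A := by
    intro l' hl'
    rcases mem_insert.mp hl' with rfl | hl'
    · simpa
    · simpa [hupd c x hl'] using hc l' hl'
  refine ⟨fun a ha => ?_, fun c hc ⟨l₁, hl₁, l₂, hl₂, hne⟩ => ?_⟩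
  · dsimp only
    obtain ⟨l₀, hl₀⟩ := hC
    have haA := hφ ha
    rw [sum_eq_single_of_mem a haA fun x hx hxa => ?_, update_eq_self]
    · exact mul_ne_zero (Finsupp.mem_support_iff.mp ha) (hT.1 a haA)
    · refine mul_eq_zero_of_right _ (hT.2 _ (hvalues _ hx fun _ _ => haA) ⟨l, mem_insert_self l C,
        l₀, mem_insert_of_mem hl₀, ?_⟩)
      simpa [hupd _ x hl₀] using hxa
  · refine sum_eq_zero fun x hx => mul_eq_zero_of_right _ (hT.2 _ (hvalues c hx
      fun l' hl' => hφ (hc l' hl')) ⟨l₁, mem_insert_of_mem hl₁, l₂, mem_insert_of_mem hl₂, ?_⟩)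
    rwa [hupd c x hl₁, hupd c x hl₂]

/-- `∑ p ∈ P, u p * v p` is a partition-rank decomposition of a tensor with slots `C` in which
every partition has two blocks, `S p` and `C \ S p`. -/
def IsBipartiteDecomposition (C : Finset ι) (P : Finset τ) (S : τ → Finset ι)
    (u v : τ → (ι → X) → k) : Prop :=
  ∀ p ∈ P, S p ⊆ C ∧ (S p).Nonempty ∧ (C \ S p).Nonempty ∧
    DependsOn (u p) (S p : Set ι) ∧ DependsOn (v p) ((C \ S p : Finset ι) : Set ι)

theorem IsBipartiteDecomposition.exists_mem_left {C : Finset ι} {P : Finset τ}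
    {S : τ → Finset ι} {u v : τ → (ι → X) → k} (h : IsBipartiteDecomposition C P S u v) {l : ι}
    (hl : l ∈ C) :
    ∃ (S' : τ → Finset ι) (u' v' : τ → (ι → X) → k), IsBipartiteDecomposition C P S' u' v' ∧
      (∀ p ∈ P, l ∈ S' p) ∧ ∀ p c, u' p c * v' p c = u p c * v p c := by
  refine ⟨fun p => if l ∈ S p then S p else C \ S p, fun p => if l ∈ S p then u p else v p,
    fun p => if l ∈ S p then v p else u p, fun p hp => ?_, fun p _ => ?_, fun p c => ?_⟩
  · obtain ⟨hSC, hS, hCS, hu, hv⟩ := h p hp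
    dsimp only
    split_ifs
    · exact ⟨hSC, hS, hCS, hu, hv⟩
    · rw [Finset.sdiff_sdiff_eq_self hSC]
      exact ⟨sdiff_subset, hCS, hS, hv, hu⟩
  · dsimp only
    split_ifs with hlS
    · exact hlS
    · exact mem_sdiff.mpr ⟨hl, hlS⟩
  · dsimp only
    split_ifs
    · rfl
    · exact mul_comm _ _

theorem IsBipartiteDecomposition.contract {C : Finset ι} {P : Finset τ} {S : τ → Finset ι}
    {u v : τ → (ι → X) → k} {l : ι} (h : IsBipartiteDecomposition (insert l C) P S u v)
    (hl : l ∉ C) (hlS : ∀ p ∈ P, l ∈ S p) (A : Finset X) (φ : X → k) :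
    IsBipartiteDecomposition C {p ∈ P | S p ≠ {l}} (fun p => (S p).erase l)
      (fun p c => ∑ x ∈ A, φ x * u p (update c l x)) v := by
  intro p hp'
  obtain ⟨hp, hSl⟩ := mem_filter.mp hp'
  obtain ⟨hSC, -, hCS, hu, hv⟩ := h p hp
  have hsdiff : C \ (S p).erase l = insert l C \ S p := by
    ext x
    by_cases hx : x = l
    · subst hx
      simp [hl, hlS p hp]
    · simp [hx]
  refine ⟨fun x hx => ?_, ?_, hsdiff ▸ hCS, ?_, hsdiff ▸ hv⟩
  · obtain ⟨hxl, hxS⟩ := mem_erase.mp hx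
    exact (mem_insert.mp (hSC hxS)).resolve_left hxl
  · rw [nonempty_iff_ne_empty, Ne, erase_eq_empty_iff]
    exact not_or.mpr ⟨ne_empty_of_mem (hlS p hp), hSl⟩
  · intro c c' hcc
    exact sum_congr rfl fun x _ => congrArg (φ x * ·) (hu.update l x hcc)

theorem IsBipartiteDecomposition.sum_contract {C : Finset ι} {P : Finset τ}
    {S : τ → Finset ι} {u v : τ → (ι → X) → k} {l : ι}
    (h : IsBipartiteDecomposition (insert l C) P S u v) (hlS : ∀ p ∈ P, l ∈ S p)
    (A : Finset X) (φ : X → k)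
    (hφ : ∀ p ∈ P, S p = {l} → ∑ x ∈ A, φ x * u p (fun _ => x) = 0) (c : ι → X) :
    ∑ p ∈ P with S p ≠ {l}, (∑ x ∈ A, φ x * u p (update c l x)) * v p c =
      ∑ x ∈ A, φ x * ∑ p ∈ P, u p (update c l x) * v p (update c l x) := by
  have hv (p) (hp : p ∈ P) (x : X) : v p (update c l x) = v p c :=
    (h p hp).2.2.2.2.apply_update_of_notMem
      (fun hl => (mem_sdiff.mp (mem_coe.mp hl)).2 (hlS p hp)) c x
  have hu (p) (hp : p ∈ P) (hS : S p = {l}) (x : X) : u p (update c l x) = u p fun _ => x :=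
    (h p hp).2.2.2.1 fun i hi => by
      obtain rfl : i = l := by simpa [hS] using hi
      simp
  calc ∑ p ∈ P with S p ≠ {l}, (∑ x ∈ A, φ x * u p (update c l x)) * v p c
      = ∑ p ∈ P, (∑ x ∈ A, φ x * u p (update c l x)) * v p c := by
        rw [← sum_filter_add_sum_filter_not P (fun p => S p ≠ {l}), left_eq_add]
        refine sum_eq_zero fun p hp => ?_
        obtain ⟨hp, hS⟩ := mem_filter.mp hp
        rw [not_not] at hS
        simp only [hu p hp hS, hφ p hp hS, zero_mul]
    _ = ∑ x ∈ A, φ x * ∑ p ∈ P, u p (update c l x) * v p (update c l x) := by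
        simp only [mul_sum, sum_mul]
        rw [sum_comm]
        refine sum_congr rfl fun x _ => sum_congr rfl fun p hp => ?_
        rw [hv p hp, mul_assoc]

theorem IsNondegenerateDiagonal.card_le_of_isBipartiteDecomposition {C : Finset ι}
    (hC : C.Nonempty) {A : Finset X} {P : Finset τ} {S : τ → Finset ι} {u v : τ → (ι → X) → k}
    (h : IsBipartiteDecomposition C P S u v)
    (hT : IsNondegenerateDiagonal C A fun c => ∑ p ∈ P, u p c * v p c) : #A ≤ #P := by
  induction hC using Finset.Nonempty.cons_induction generalizing A P S u v with
  | singleton l =>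
    have hP : P = ∅ := eq_empty_of_forall_notMem fun p hp => by
      obtain ⟨hSC, hS, hCS, -⟩ := h p hp
      rw [hS.subset_singleton_iff.mp hSC, sdiff_self] at hCS
      exact not_nonempty_empty hCS
    have hA : A = ∅ := eq_empty_of_forall_notMem fun a ha => hT.1 a ha (by simp [hP])
    simp [hA]
  | cons l C hl hC ih =>
    -- Contract the slot `l` against a `φ` that kills every term whose `l`-side depends on `l`
    -- alone; `φ` can be chosen with support of size at least `#A` minus the number of those terms.
    rw [cons_eq_insert] at h hT
    obtain ⟨S, u', v', h, hlS, huv⟩ := h.exists_mem_left (mem_insert_self l C)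
    simp only [← huv] at hT
    obtain ⟨φ, hφA, hφ, hcard⟩ :=
      A.exists_orthogonal_finsupp_card_support_ge {p ∈ P | S p = {l}} fun p x => u' p fun _ => x
    have hcontract := ih (h.contract hl hlS A φ) (by
      simpa only [h.sum_contract hlS A φ fun p hp hS => hφ p (mem_filter.mpr ⟨hp, hS⟩)]
        using hT.contract hl hC hφA)
    have hsplit := card_filter_add_card_filter_not (s := P) (fun p => S p = {l})
    simp only [← ne_eq] at hsplit
    omega

end Tensor

section Monomials

variable {ι σ : Type*}

theorem Finsupp.sum_single_one_apply_of_injective [DecidableEq ι] {x : ι → σ} (hx : Injective x)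
    (B : Finset ι) (i : ι) :
    (∑ j ∈ B, single (x j) 1 : σ →₀ ℕ) (x i) = if i ∈ B then 1 else 0 := by
  simp [finsetSum_apply, single_apply, hx.eq_iff]

theorem Finsupp.sum_single_one_apply_of_notMem_range {x : ι → σ} {y : σ} (hy : y ∉ Set.range x)
    (B : Finset ι) : (∑ j ∈ B, single (x j) 1 : σ →₀ ℕ) y = 0 := by
  simp_all [finsetSum_apply]

theorem Finsupp.eq_sum_single_one [DecidableEq ι] {x : ι → σ} (hx : Injective x)
    {B : Finset ι} {r : σ →₀ ℕ} (hrange : ∀ i, r (x i) = if i ∈ B then 1 else 0)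
    (hcompl : ∀ y ∉ Set.range x, r y = 0) : r = ∑ i ∈ B, single (x i) 1 := by
  ext y
  obtain ⟨i, rfl⟩ | hy := em (y ∈ Set.range x)
  · rw [hrange, sum_single_one_apply_of_injective hx]
  · rw [hcompl y hy, sum_single_one_apply_of_notMem_range hy]

theorem Finsupp.injective_sum_single_one {x : ι → σ} (hx : Injective x) :
    Injective fun B : Finset ι => (∑ i ∈ B, single (x i) 1 : σ →₀ ℕ) := by
  intro B B' h
  ext i
  have := congrArg (· (x i)) h
  simp only [sum_single_one_apply_of_injective hx] at this
  split_ifs at this <;> simp_all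

theorem Finsupp.mem_range_of_sum_single_one_eq [Fintype ι] {x y : ι → σ} (hx : Injective x)
    (h : ∑ j, single (x j) 1 = (∑ j, single (y j) 1 : σ →₀ ℕ)) (i : ι) : x i ∈ Set.range y := by
  by_contra hy
  have := congrArg (· (x i)) h
  simp [sum_single_one_apply_of_injective hx, sum_single_one_apply_of_notMem_range hy] at this

theorem Finsupp.antidiagonal_sum_single_one [Fintype ι] [DecidableEq ι] {x : ι → σ}
    (hx : Injective x) :
    antidiagonal (∑ i, single (x i) 1 : σ →₀ ℕ) =
      univ.image fun B : Finset ι => (∑ i ∈ B, single (x i) 1, ∑ i ∈ Bᶜ, single (x i) 1) := by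
  ext ⟨p, q⟩
  simp only [HasAntidiagonal.mem_antidiagonal, mem_image, mem_univ, true_and, Prod.mk.injEq]
  constructor
  · intro hpq
    have hpq' (y : σ) : p y + q y = (∑ i, single (x i) 1 : σ →₀ ℕ) y := by rw [← hpq]; rfl
    have hrange (i : ι) : p (x i) + q (x i) = 1 := by
      simpa [sum_single_one_apply_of_injective hx] using hpq' (x i)
    have hcompl (y : σ) (hy : y ∉ Set.range x) : p y + q y = 0 := by
      simpa [sum_single_one_apply_of_notMem_range hy] using hpq' y
    refine ⟨univ.filter fun i => p (x i) ≠ 0,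
      (eq_sum_single_one hx (fun i => ?_) fun y hy => ?_).symm,
      (eq_sum_single_one hx (fun i => ?_) fun y hy => ?_).symm⟩
    · have := hrange i
      simp only [mem_filter, mem_univ, true_and]
      split_ifs <;> omega
    · have := hcompl y hy
      omega
    · have := hrange i
      simp only [mem_compl, mem_filter, mem_univ, true_and, not_not]
      split_ifs <;> omega
    · have := hcompl y hy
      omega
  · rintro ⟨B, rfl, rfl⟩
    exact sum_add_sum_compl B _

theorem MvPowerSeries.coeff_sum_single_one_mul {R : Type*} [CommSemiring R] [Fintype ι]
    [DecidableEq ι] {x : ι → σ} (hx : Injective x) (F G : MvPowerSeries σ R) :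
    coeff (∑ i, Finsupp.single (x i) 1) (F * G) =
      ∑ B : Finset ι, coeff (∑ i ∈ B, Finsupp.single (x i) 1) F *
        coeff (∑ i ∈ Bᶜ, Finsupp.single (x i) 1) G := by
  rw [coeff_mul, Finsupp.antidiagonal_sum_single_one hx,
    sum_image fun B _ B' _ h => Finsupp.injective_sum_single_one hx (Prod.ext_iff.mp h).1]

theorem MvPowerSeries.coeff_sum_single_one_sum_mul {R τ : Type*} [CommSemiring R] [Fintype ι]
    [DecidableEq ι] [Fintype τ] {x : ι → σ} (hx : Injective x) {G H : τ → MvPowerSeries σ R}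
    (hG : ∀ t, constantCoeff (G t) = 0) (hH : ∀ t, constantCoeff (H t) = 0) :
    coeff (∑ i, Finsupp.single (x i) 1) (∑ t, G t * H t) =
      ∑ p : τ × Finset ι with p.2.Nonempty ∧ (univ \ p.2).Nonempty,
        coeff (∑ i ∈ p.2, Finsupp.single (x i) 1) (G p.1) *
          coeff (∑ i ∈ univ \ p.2, Finsupp.single (x i) 1) (H p.1) := by
  simp only [map_sum, coeff_sum_single_one_mul hx, compl_eq_univ_sdiff]
  rw [← Fintype.sum_prod_type', sum_filter_of_ne fun p _ hp => ?_]
  simp only [nonempty_iff_ne_empty]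
  constructor <;> rintro h <;> simp [h, hG, hH] at hp

theorem dependsOn_coeff_sum_single_one {R X : Type*} [CommSemiring R] (g : ι → X → σ)
    (B : Finset ι) (F : MvPowerSeries σ R) :
    DependsOn (fun c : ι → X => MvPowerSeries.coeff (∑ i ∈ B, Finsupp.single (g i (c i)) 1) F) B :=
  fun c c' h => congrArg (MvPowerSeries.coeff · F) (sum_congr rfl fun i hi => by rw [h i hi])

end Monomials

theorem MvPowerSeriesIsHomogeneous.constantCoeff_eq_zero {k : Type*} [CommSemiring k]
    {F : MvPowerSeries ℕ k} {n : ℕ} (hF : MvPowerSeriesIsHomogeneous F n) (hn : n ≠ 0) :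
    MvPowerSeries.constantCoeff F = 0 := by
  by_contra h
  exact hn (by simpa using (hF 0 h).symm)

section GenericSeries

variable {k : Type*} [Field k] {e ke : ℕ} {π : Fin ke × Fin e × ℕ → ℕ}

theorem injective_slots (hπ : Injective π) (j : Fin ke) (c : Fin e → ℕ) :
    Injective fun l => π (j, l, c l) :=
  fun _ _ h => (Prod.ext_iff.mp (Prod.ext_iff.mp (hπ h)).2).1

theorem eq_of_sum_single_one_eq (hπ : Injective π) {j j' : Fin ke} {c : Fin e → ℕ} {i : ℕ}
    (h : ∑ l, Finsupp.single (π (j, l, c l)) 1 = ∑ l, Finsupp.single (π (j', l, i)) 1)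
    (l : Fin e) : j' = j ∧ i = c l := by
  obtain ⟨l', hl'⟩ := Finsupp.mem_range_of_sum_single_one_eq (injective_slots hπ j c) h l
  have := hπ hl'
  simp only [Prod.mk.injEq] at this
  exact ⟨this.1, this.2.2⟩

theorem isNondegenerateDiagonal_coeff_sum_smul (he : e ≠ 0) (hπ : Injective π)
    {f : Fin ke → MvPowerSeries ℕ k}
    (hf : ∀ (j : Fin ke) (d : ℕ →₀ ℕ), MvPowerSeries.coeff d (f j) =
      if ∃ i : ℕ, d = ∑ l : Fin e, Finsupp.single (π (j, l, i)) 1 then 1 else 0)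
    {lam : Fin ke → k} {j₀ : Fin ke} (hj₀ : lam j₀ ≠ 0) (A : Finset ℕ) :
    IsNondegenerateDiagonal univ A fun c : Fin e → ℕ =>
      MvPowerSeries.coeff (∑ l, Finsupp.single (π (j₀, l, c l)) 1) (∑ j, lam j • f j) := by
  have l₀ : Fin e := ⟨0, Nat.pos_of_ne_zero he⟩
  refine ⟨fun a _ => ?_, fun c _ ⟨l₁, _, l₂, _, hne⟩ => ?_⟩ <;> dsimp only
  · rw [map_sum, sum_eq_single j₀ (fun j _ hj => ?_) (by simp), MvPowerSeries.coeff_smul, hf,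
      if_pos ⟨a, rfl⟩, mul_one]
    · exact hj₀
    · rw [MvPowerSeries.coeff_smul, hf, if_neg, mul_zero]
      rintro ⟨i, hi⟩
      exact hj (eq_of_sum_single_one_eq hπ hi l₀).1
  · rw [map_sum]
    refine sum_eq_zero fun j _ => ?_
    rw [MvPowerSeries.coeff_smul, hf, if_neg, mul_zero]
    rintro ⟨i, hi⟩
    exact hne ((eq_of_sum_single_one_eq hπ hi l₁).2.symm.trans (eq_of_sum_single_one_eq hπ hi l₂).2)

end GenericSeries

theorem no_strength_decomposition_of_generic_series_general {k : Type*} [Field k]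
    (e ke : ℕ) (he : 2 ≤ e)
    (π : Fin ke × Fin e × ℕ → ℕ) (hπ : Function.Injective π)
    (f : Fin ke → MvPowerSeries ℕ k)
    (hf : ∀ (j : Fin ke) (d : ℕ →₀ ℕ),
      MvPowerSeries.coeff d (f j) =
        if ∃ i : ℕ, d = ∑ l : Fin e, Finsupp.single (π (j, l, i)) 1 then 1 else 0)
    (lam : Fin ke → k) (hlam : lam ≠ 0) :
    ¬ ∃ (r : ℕ) (G H : Fin r → MvPowerSeries ℕ k) (a b : Fin r → ℕ),
      (∀ i, 1 ≤ a i ∧ a i ≤ e - 1 ∧ MvPowerSeriesIsHomogeneous (G i) (a i)) ∧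
      (∀ i, 1 ≤ b i ∧ b i ≤ e - 1 ∧ MvPowerSeriesIsHomogeneous (H i) (b i)) ∧
      (∑ j, lam j • f j) = ∑ i, G i * H i := by
  rintro ⟨r, G, H, a, b, hG, hH, hdec⟩
  obtain ⟨j₀, hj₀⟩ := Function.ne_iff.mp hlam
  let P : Finset (Fin r × Finset (Fin e)) := {p | p.2.Nonempty ∧ (univ \ p.2).Nonempty}
  let u (p : Fin r × Finset (Fin e)) (c : Fin e → ℕ) :=
    MvPowerSeries.coeff (∑ l ∈ p.2, Finsupp.single (π (j₀, l, c l)) 1) (G p.1)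
  let v (p : Fin r × Finset (Fin e)) (c : Fin e → ℕ) :=
    MvPowerSeries.coeff (∑ l ∈ univ \ p.2, Finsupp.single (π (j₀, l, c l)) 1) (H p.1)
  have hdecomp : IsBipartiteDecomposition univ P (·.2) u v := fun p hp =>
    ⟨subset_univ _, (mem_filter.mp hp).2.1, (mem_filter.mp hp).2.2,
      dependsOn_coeff_sum_single_one (fun l i => π (j₀, l, i)) _ _,
      dependsOn_coeff_sum_single_one (fun l i => π (j₀, l, i)) _ _⟩
  have hdiag : IsNondegenerateDiagonal univ (range (#P + 1)) fun c => ∑ p ∈ P, u p c * v p c := by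
    convert isNondegenerateDiagonal_coeff_sum_smul (by omega) hπ hf hj₀ _ using 2 with c
    rw [hdec, MvPowerSeries.coeff_sum_single_one_sum_mul (injective_slots hπ j₀ c)
      (fun t => (hG t).2.2.constantCoeff_eq_zero (Nat.one_le_iff_ne_zero.mp (hG t).1))
      (fun t => (hH t).2.2.constantCoeff_eq_zero (Nat.one_le_iff_ne_zero.mp (hH t).1))]
  have := hdiag.card_le_of_isBipartiteDecomposition ⟨⟨0, by omega⟩, mem_univ _⟩ hdecomp
  simp at this

/-- Let `e ≥ 2`, `k_e ≥ 1` and let `π : {1,…,k_e} × {1,…,e} × ℕ → ℕ` be injective. For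
`j = 1,…,k_e` let `f_j = ∑_{i ∈ ℕ} x_{π(j,1,i)} ⋯ x_{π(j,e,i)}` (a homogeneous degree-`e`
power series, specified here by its coefficients). Then every nonzero linear combination
`λ_1 f_1 + … + λ_{k_e} f_{k_e}` admits no strength decomposition: it is not a finite sum
`∑_{j=1}^r G_j H_j` with each `G_j`, `H_j` homogeneous of degree strictly between `0`
and `e`. -/
theorem no_strength_decomposition_of_generic_series {k : Type*} [Field k]
    (e ke : ℕ) (he : 2 ≤ e) (hke : 1 ≤ ke)
    (π : Fin ke × Fin e × ℕ → ℕ) (hπ : Function.Injective π)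
    (f : Fin ke → MvPowerSeries ℕ k)
    (hf : ∀ (j : Fin ke) (d : ℕ →₀ ℕ),
      MvPowerSeries.coeff d (f j) =
        if ∃ i : ℕ, d = ∑ l : Fin e, Finsupp.single (π (j, l, i)) 1 then 1 else 0)
    (lam : Fin ke → k) (hlam : lam ≠ 0) :
    ¬ ∃ (r : ℕ) (G H : Fin r → MvPowerSeries ℕ k) (a b : Fin r → ℕ),
      (∀ i, 1 ≤ a i ∧ a i ≤ e - 1 ∧ MvPowerSeriesIsHomogeneous (G i) (a i)) ∧
      (∀ i, 1 ≤ b i ∧ b i ≤ e - 1 ∧ MvPowerSeriesIsHomogeneous (H i) (b i)) ∧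
      (∑ j, lam j • f j) = ∑ i, G i * H i :=
  no_strength_decomposition_of_generic_series_general e ke he π hπ f hf lam hlam
end
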